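/- Let τ be a territory and t a transition enabled in τ. Then the replaced territory replace(t,τ) is a territory, and τ ▷t replace(t,τ) holds. -/
import Mathlib


/-!
Common semantic framework for "The Ghosts of Empires":
Petri programs, Hoare triples, invariant domains, Owicki-Gries annotations,
territories, empires, saturated empires, focus.
-/

namespace GhostsOfEmpires

/-- Reachable states of a (partial) state machine with transition alphabet `T`. -/
inductive EmpReach {Q T : Type*} (q0 : Q) (δ : Q → T → Option Q) : Q → Prop
  | init : EmpReach q0 δ q0
  | step {q : Q} {t : T} {q' : Q} : EmpReach q0 δ q → δ q t = some q' → EmpReach q0 δ q'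

/-- Restriction of a partial transition function to the reachable part. -/
def restrictδ {Q T : Type*} (q0 : Q) (δ : Q → T → Option Q)
    (q : {q : Q // EmpReach q0 δ q}) (t : T) : Option {q : Q // EmpReach q0 δ q} :=
  match h : δ q.val t with
  | none => none
  | some q' => some ⟨q', EmpReach.step q.property h⟩

/-- A Petri program: places, transitions, flow relation (given by `pre`/`post`),
initial marking, statement labels, error places, and a semantics for statements
(formulas over the program variables are modelled semantically as predicates on `State`,
the type of valuations of the program variables). Since the program is assumed one-safe,
markings are identified with sets of places. -/
structure PetriNet (Place Trans Stmt State : Type*) where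
  pre : Trans → Set Place
  post : Trans → Set Place
  mInit : Set Place
  label : Trans → Stmt
  err : Set Place
  sem : Stmt → State → State → Prop

/-- Owicki-Gries annotation: ghost state type `GS` (the product of the domains of the
ghost variables), invariant mapping `ω` (formulas over program and ghost variables),
ghost update mapping `γ` (executed after the statement of the transition), and
initial ghost valuation `ρ`. -/
structure OG (Place Trans State GS : Type*) where
  ω : Place → State → GS → Prop
  γ : Trans → State → GS → GS
  ρ : GS

/-- The data of an empire: a state machine with laws and territories. -/
structure EmpireData (Place Trans State Q : Type*) where
  qInit : Q
  δ : Q → Trans → Option Q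
  law : Q → State → Prop
  terr : Q → Set (Set Place)

/-- `Q_p`: the set of empire states whose territory contains `p` in some region. -/
def Qp {Place Trans State Q : Type*} (E : EmpireData Place Trans State Q) (p : Place) :
    Set Q :=
  {q | ∃ r ∈ E.terr q, p ∈ r}

/-- The imperial Owicki-Gries annotation of an empire: one ghost variable `g` ranging
over the states `Q`, initialized to `qInit`, updated according to `δ`, and
`ω(p) = ⋁_{q ∈ Q_p} (g = q ∧ law q)`. -/
def imperialOG {Place Trans State Q : Type*} (E : EmpireData Place Trans State Q) :
    OG Place Trans State Q where
  ω := fun p s g => ∃ q ∈ Qp E p, g = q ∧ E.law q s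
  γ := fun t _ g => (E.δ g t).getD g
  ρ := E.qInit

/-- Restriction of an empire given by raw data to its reachable part. -/
def restrictEmpire {Place Trans State Q : Type*} (q0 : Q) (δ0 : Q → Trans → Option Q)
    (law : Q → State → Prop) (terr : Q → Set (Set Place)) :
    EmpireData Place Trans State {q : Q // EmpReach q0 δ0 q} where
  qInit := ⟨q0, EmpReach.init⟩
  δ := restrictδ q0 δ0
  law := fun q => law q.val
  terr := fun q => terr q.val

/-- `m ∈ ⟦τ⟧`: `m` is derived by taking exactly one place from each region of `τ`. -/
def InTreaty {Place : Type*} (τ : Set (Set Place)) (m : Set Place) : Prop :=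
  ∃ f : Set Place → Place, (∀ r ∈ τ, f r ∈ r) ∧ m = {p | ∃ r ∈ τ, p = f r}

namespace PetriNet

variable {Place Trans Stmt State : Type*} (N : PetriNet Place Trans Stmt State)

/-- `m ▷t m'`: transition `t` is enabled in `m` and firing it yields `m'`. -/
def fires (m : Set Place) (t : Trans) (m' : Set Place) : Prop :=
  N.pre t ⊆ m ∧ m' = (m \ N.pre t) ∪ N.post t

/-- Firing sequences. -/
inductive FiringSeq : Set Place → List Trans → Set Place → Prop
  | nil (m : Set Place) : FiringSeq m [] m
  | cons {m m' m'' : Set Place} {t : Trans} {ts : List Trans} :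
      N.fires m t m' → FiringSeq m' ts m'' → FiringSeq m (t :: ts) m''

/-- A marking is reachable if some firing sequence from the initial marking ends in it. -/
def Reachable (m : Set Place) : Prop := ∃ ts, N.FiringSeq N.mInit ts m

/-- The Hoare triple `{φ} st {ψ}` holds. -/
def Hoare (φ : State → Prop) (st : Stmt) (ψ : State → Prop) : Prop :=
  ∀ s s', φ s → N.sem st s s' → ψ s'

/-- Semantics of a sequence of statements. -/
inductive SeqSem : List Stmt → State → State → Prop
  | nil (s : State) : SeqSem [] s s
  | cons {st : Stmt} {sts : List Stmt} {s s' s'' : State} :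
      N.sem st s s' → SeqSem sts s' s'' → SeqSem (st :: sts) s s''

/-- The Petri program is correct: for every firing sequence reaching a marking that
contains an error place, the Hoare triple `{⊤} λ(t1)...λ(tn) {⊥}` holds. -/
def Correct : Prop :=
  ∀ ts m, N.FiringSeq N.mInit ts m → (m ∩ N.err).Nonempty →
    ∀ s s', N.SeqSem (List.map N.label ts) s s' → False

/-- `p` and `t` are co-marked. -/
def coMarked (p : Place) (t : Trans) : Prop :=
  p ∉ N.pre t ∧ ∃ m, N.Reachable m ∧ p ∈ m ∧ N.pre t ⊆ m

/-- Two places are co-related. -/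
def coRelated (p p' : Place) : Prop :=
  p ≠ p' ∧ ∃ m, N.Reachable m ∧ p ∈ m ∧ p' ∈ m

/-- A region: a nonempty set of places that are pairwise not co-related. -/
def IsRegion (r : Set Place) : Prop :=
  r.Nonempty ∧ ∀ p1 ∈ r, ∀ p2 ∈ r, ¬ N.coRelated p1 p2

/-- A territory: a set of pairwise disjoint regions all of whose treaty members are
reachable markings. -/
def IsTerritory (τ : Set (Set Place)) : Prop :=
  (∀ r ∈ τ, N.IsRegion r) ∧
  (∀ r1 ∈ τ, ∀ r2 ∈ τ, r1 ≠ r2 → r1 ∩ r2 = ∅) ∧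
  (∀ m, InTreaty τ m → N.Reachable m)

/-- `t` is enabled in the territory `τ`: every predecessor place lies in a distinct
region of `τ`. -/
def terrEnabled (t : Trans) (τ : Set (Set Place)) : Prop :=
  ∃ f : Place → Set Place, (∀ p ∈ N.pre t, f p ∈ τ ∧ p ∈ f p) ∧
    ∀ p1 ∈ N.pre t, ∀ p2 ∈ N.pre t, p1 ≠ p2 → f p1 ≠ f p2

/-- `τ ▷t τ'`: the firing relation on territories. -/
def terrFires (τ : Set (Set Place)) (t : Trans) (τ' : Set (Set Place)) : Prop :=
  ∃ f f' : Place → Set Place,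
    (∀ p ∈ N.pre t, f p ∈ τ ∧ p ∈ f p) ∧
    (∀ p1 ∈ N.pre t, ∀ p2 ∈ N.pre t, p1 ≠ p2 → f p1 ≠ f p2) ∧
    (∀ p ∈ N.post t, N.IsRegion (f' p) ∧ p ∈ f' p) ∧
    (∀ p1 ∈ N.post t, ∀ p2 ∈ N.post t, p1 ≠ p2 → f' p1 ≠ f' p2) ∧
    τ' = (τ \ {r | ∃ p ∈ N.pre t, r = f p}) ∪ {r | ∃ p ∈ N.post t, r = f' p}

/-- The bystander regions of `t` in `τ`. -/
def bystanders (t : Trans) (τ : Set (Set Place)) : Set (Set Place) :=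
  {r ∈ τ | r ∩ N.pre t = ∅}

/-- The replaced territory `replace(t,τ)`. -/
def replaceT (t : Trans) (τ : Set (Set Place)) : Set (Set Place) :=
  N.bystanders t τ ∪ {r | ∃ p ∈ N.post t, r = {p}}

/-- `τ` is extendable with `t`. -/
def extendable (t : Trans) (τ : Set (Set Place)) : Prop :=
  N.terrEnabled t τ ∧ (∃ p, N.pre t = {p}) ∧ (∃ p', N.post t = {p'}) ∧
    ∀ r ∈ τ, (r ∩ N.pre t).Nonempty → ∀ p'' ∈ r, ∀ p' ∈ N.post t, ¬ N.coRelated p' p''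

/-- The extended territory `extend(t,τ)`: the (unique) region meeting `•t` is enlarged
by the successor place. -/
def extendT (t : Trans) (τ : Set (Set Place)) : Set (Set Place) :=
  N.bystanders t τ ∪ {r' | ∃ r ∈ τ, (r ∩ N.pre t).Nonempty ∧ r' = r ∪ N.post t}

/-- An invariant domain for `N`: a finite set `A` of formulas (modelled semantically)
containing `⊥` and `⊤`, and a post operator such that `{φ} λ(t) {post(φ,t)}` always holds. -/
structure InvDomain where
  A : Set (State → Prop)
  postF : (State → Prop) → Trans → (State → Prop)
  finA : A.Finite
  bot_mem : (fun _ => False) ∈ A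
  top_mem : (fun _ => True) ∈ A
  post_mem : ∀ φ ∈ A, ∀ t, postF φ t ∈ A
  post_hoare : ∀ φ ∈ A, ∀ t, N.Hoare φ (N.label t) (postF φ t)

/-- Reachable abstract configurations, generically over a type `Φ` of laws with a post
operator `postA` and top element `φtop`. -/
inductive AbsReachG {Φ : Type*} (postA : Φ → Trans → Φ) (φtop : Φ) : Set Place → Φ → Prop
  | init : AbsReachG postA φtop N.mInit φtop
  | step {m : Set Place} {φ : Φ} {t : Trans} {m' : Set Place} :
      AbsReachG postA φtop m φ → N.fires m t m' → AbsReachG postA φtop m' (postA φ t)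

/-- The invariant domain is safe: every reachable abstract configuration at a marking
containing an error place has law equivalent to `⊥`. -/
def SafeDomain (D : InvDomain N) : Prop :=
  ∀ m φ, N.AbsReachG D.postF (fun _ => True) m φ → (m ∩ N.err).Nonempty → ∀ s, ¬ φ s

/-- Validity of an Owicki-Gries annotation: initial, inductive, interference-free, safe. -/
structure OGValid {GS : Type*} (og : OG Place Trans State GS) : Prop where
  initialCond : ∀ p ∈ N.mInit, ∀ s, og.ω p s og.ρ
  inductiveCond : ∀ t s g s', (∀ p ∈ N.pre t, og.ω p s g) →
    N.sem (N.label t) s s' → ∀ p ∈ N.post t, og.ω p s' (og.γ t s' g)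
  interferenceFree : ∀ t p, N.coMarked p t → ∀ s g s',
    og.ω p s g → (∀ p' ∈ N.pre t, og.ω p' s g) →
    N.sem (N.label t) s s' → og.ω p s' (og.γ t s' g)
  safeCond : ∀ p ∈ N.err, ∀ s g, ¬ og.ω p s g

/-- The naive Owicki-Gries annotation `OG_naive(A,post)`: the ghost state is the set of
places `p` whose boolean ghost variable `g_p` is true; `ω(p)` is the disjunction over all
reachable markings `m` containing `p` of `χ(m) ∧ β(m)`. -/
def naiveOG (D : InvDomain N) : OG Place Trans State (Set Place) where
  ω := fun p s g => ∃ m, N.Reachable m ∧ p ∈ m ∧ g = m ∧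
    ∃ φ, N.AbsReachG D.postF (fun _ => True) m φ ∧ φ s
  γ := fun t _ g => (g \ (N.pre t \ N.post t)) ∪ (N.post t \ N.pre t)
  ρ := N.mInit

/-- Validity of an empire. -/
structure ValidEmpire {Q : Type*} (E : EmpireData Place Trans State Q) : Prop where
  terrOK : ∀ q, N.IsTerritory (E.terr q)
  initialLaw : ∀ s, E.law E.qInit s
  initialTerr : InTreaty (E.terr E.qInit) N.mInit
  inductiveLaw : ∀ q t, N.terrEnabled t (E.terr q) →
    (∃ q', E.δ q t = some q' ∧ N.Hoare (E.law q) (N.label t) (E.law q')) ∨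
      N.Hoare (E.law q) (N.label t) (fun _ => False)
  inductiveTerr : ∀ q t q', E.δ q t = some q' → N.terrFires (E.terr q) t (E.terr q')
  safeCond : ∀ q, (∃ r ∈ E.terr q, (r ∩ N.err).Nonempty) → ∀ s, ¬ E.law q s

/-- The initial territory `τ_init = {{p} | p ∈ m_init}`. -/
def tauInit : Set (Set Place) := {r | ∃ p ∈ N.mInit, r = {p}}

/-- `SaturateG postA φ rb τ τ'` means `τ' ∈ saturate(φ, rb, τ)` (saturated successors). -/
inductive SaturateG {Φ : Type*} (postA : Φ → Trans → Φ) (φ : Φ) (rb : Set (Set Place)) :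
    Set (Set Place) → Set (Set Place) → Prop
  | base {τ : Set (Set Place)} :
      (¬ ∃ t, N.extendable t τ ∧ ¬ N.terrFires τ t τ ∧ postA φ t = φ ∧
        rb ⊆ N.bystanders t τ) →
      SaturateG postA φ rb τ τ
  | step {τ : Set (Set Place)} {t : Trans} {τ' : Set (Set Place)} :
      N.extendable t τ → ¬ N.terrFires τ t τ → postA φ t = φ →
      rb ⊆ N.bystanders t τ → SaturateG postA φ rb (N.extendT t τ) τ' →
      SaturateG postA φ rb τ τ'

/-- `(q0, δ0)` is the data of a saturated empire (before restriction to the reachable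
part), generically over a type `Φ` of laws with post operator `postA`, interpretation
`interp` and top element `φtop`. -/
structure IsSaturatedG {Φ : Type*} (postA : Φ → Trans → Φ) (interp : Φ → State → Prop)
    (φtop : Φ) (q0 : Set (Set Place) × Φ)
    (δ0 : Set (Set Place) × Φ → Trans → Option (Set (Set Place) × Φ)) : Prop where
  initCond : ∃ τ, N.SaturateG postA φtop ∅ N.tauInit τ ∧ q0 = (τ, φtop)
  undefCond : ∀ τ φ t, (¬ N.terrEnabled t τ ∨ ∀ s, ¬ interp (postA φ t) s) →
    δ0 (τ, φ) t = none
  selfCond : ∀ τ φ t, N.terrEnabled t τ → (∃ s, interp (postA φ t) s) →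
    N.terrFires τ t τ → postA φ t = φ → δ0 (τ, φ) t = some (τ, φ)
  stepCond : ∀ τ φ t, N.terrEnabled t τ → (∃ s, interp (postA φ t) s) →
    ¬ (N.terrFires τ t τ ∧ postA φ t = φ) →
    ∃ τ', N.SaturateG postA (postA φ t) (N.bystanders t τ) (N.replaceT t τ) τ' ∧
      δ0 (τ, φ) t = some (τ', postA φ t)

open Classical in
/-- The transition function of the naive empire. -/
noncomputable def naiveδ (D : InvDomain N) (q : Set (Set Place) × (State → Prop))
    (t : Trans) : Option (Set (Set Place) × (State → Prop)) :=
  if N.terrEnabled t q.1 ∧ ∃ s, D.postF q.2 t s then some (N.replaceT t q.1, D.postF q.2 t)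
  else none

/-- The naive empire `E_naive(A,post)`: the reachable part of the empire whose states are
pairs of territories and laws, with initial state `⟨τ_init, ⊤⟩`. -/
noncomputable def naiveEmpire (D : InvDomain N) :
    EmpireData Place Trans State
      {q : Set (Set Place) × (State → Prop) //
        EmpReach (N.tauInit, fun _ => True) (N.naiveδ D) q} :=
  restrictEmpire (N.tauInit, fun _ => True) (N.naiveδ D) Prod.snd Prod.fst

open Classical in
/-- The product post operator of a family of invariant domains, acting on vectors of
component formulas (the vector `φv` represents the conjunction `⋀_i φv i`). -/
noncomputable def prodPost {n : ℕ} (Ds : Fin n → InvDomain N)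
    (φv : Fin n → State → Prop) (t : Trans) : Fin n → State → Prop :=
  if ∀ i, ∃ s, (Ds i).postF (φv i) t s then fun i => (Ds i).postF (φv i) t
  else fun _ _ => False

/-- Safety of the product invariant domain. -/
def prodSafe {n : ℕ} (Ds : Fin n → InvDomain N) : Prop :=
  ∀ m φv, N.AbsReachG (N.prodPost Ds) (fun _ _ => True) m φv →
    (m ∩ N.err).Nonempty → ∀ s, ¬ ∀ i, φv i s

/-- A focus on a saturated empire (given by raw data `(q0, δ0)` over vector laws). -/
structure IsFocus {n : ℕ} (Ds : Fin n → InvDomain N)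
    (q0 : Set (Set Place) × (Fin n → State → Prop))
    (δ0 : Set (Set Place) × (Fin n → State → Prop) → Trans →
      Option (Set (Set Place) × (Fin n → State → Prop)))
    (ℓ : Set (Set Place) × (Fin n → State → Prop) → Set Place → Set (Fin n)) :
    Prop where
  safeCond : ∀ q, EmpReach q0 δ0 q → ∀ t, N.terrEnabled t q.1 → δ0 q t = none →
    ∃ r ∈ q.1, ∃ i, (r ∩ N.pre t).Nonempty ∧ (∀ s, ¬ (Ds i).postF (q.2 i) t s) ∧ i ∈ ℓ q r
  inductiveEdge : ∀ q q' t, EmpReach q0 δ0 q → δ0 q t = some q' →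
    ∀ r' ∈ q'.1, (r' ∩ N.post t).Nonempty → ∀ i ∈ ℓ q' r',
      ∃ r ∈ q.1, (r ∩ N.pre t).Nonempty ∧ i ∈ ℓ q r
  bystandersCond : ∀ q q' t, EmpReach q0 δ0 q → δ0 q t = some q' →
    ∀ r ∈ N.bystanders t q.1, ∀ i ∈ ℓ q' r, i ∈ ℓ q r

end PetriNet

/-- A saturated empire (over scalar laws): the reachable part of the data `(q0, δ0)`. -/
def saturatedEmpire {Place Trans State : Type*}
    (q0 : Set (Set Place) × (State → Prop))
    (δ0 : Set (Set Place) × (State → Prop) → Trans →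
      Option (Set (Set Place) × (State → Prop))) :
    EmpireData Place Trans State {q // EmpReach q0 δ0 q} :=
  restrictEmpire q0 δ0 Prod.snd Prod.fst

/-- The focused law `law_p(q) = ⋀ {φ_i | ∃ r ∈ terr(q). i ∈ ℓ(q,r) ∧ p ∈ r}`. -/
def lawP {Place State : Type*} {n : ℕ}
    (ℓ : Set (Set Place) × (Fin n → State → Prop) → Set Place → Set (Fin n))
    (q : Set (Set Place) × (Fin n → State → Prop)) (p : Place) : State → Prop :=
  fun s => ∀ i, (∃ r ∈ q.1, i ∈ ℓ q r ∧ p ∈ r) → q.2 i s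

/-- `law_X(q) = ⋀_{p ∈ X} law_p(q)`. -/
def lawX {Place State : Type*} {n : ℕ}
    (ℓ : Set (Set Place) × (Fin n → State → Prop) → Set Place → Set (Fin n))
    (q : Set (Set Place) × (Fin n → State → Prop)) (X : Set Place) : State → Prop :=
  fun s => ∀ p ∈ X, lawP ℓ q p s

/-- The focused imperial Owicki-Gries annotation `OG_{E,ℓ}` of the saturated empire
given by `(q0, δ0)` (restricted to its reachable part) with focus `ℓ`:
`ω(p) = ⋁_{q ∈ Q_p} (g = q ∧ law_p(q))`. -/
def focusedOG {Place Trans State : Type*} {n : ℕ}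
    (q0 : Set (Set Place) × (Fin n → State → Prop))
    (δ0 : Set (Set Place) × (Fin n → State → Prop) → Trans →
      Option (Set (Set Place) × (Fin n → State → Prop)))
    (ℓ : Set (Set Place) × (Fin n → State → Prop) → Set Place → Set (Fin n)) :
    OG Place Trans State {q // EmpReach q0 δ0 q} where
  ω := fun p s g => ∃ q : {q // EmpReach q0 δ0 q},
    (∃ r ∈ q.val.1, p ∈ r) ∧ g = q ∧ lawP ℓ q.val p s
  γ := fun t _ g => (restrictδ q0 δ0 g t).getD g
  ρ := ⟨q0, EmpReach.init⟩

namespace PetriNet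

variable {Place Trans Stmt State : Type*} {N : PetriNet Place Trans Stmt State}

lemma FiringSeq.append : ∀ {m0 m : Set Place} {ts : List Trans},
    N.FiringSeq m0 ts m → ∀ {m' : Set Place} {t : Trans}, N.fires m t m' →
    N.FiringSeq m0 (ts ++ [t]) m' := by
  intro m0 m ts h
  induction h with
  | nil m => intro m' t h2; exact .cons h2 (.nil m')
  | cons hf _ ih => intro m' t h2; exact .cons hf (ih h2)

lemma Reachable.step {m m' : Set Place} {t : Trans} (h : N.Reachable m)
    (h2 : N.fires m t m') : N.Reachable m' := by
  obtain ⟨ts, hts⟩ := h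
  exact ⟨ts ++ [t], hts.append h2⟩

lemma singleton_isRegion (p : Place) : N.IsRegion {p} := by
  refine ⟨⟨p, rfl⟩, ?_⟩
  intro p1 hp1 p2 hp2 hco
  rw [Set.mem_singleton_iff] at hp1 hp2
  subst hp1; subst hp2
  exact hco.1 rfl

end PetriNet

end GhostsOfEmpires
open GhostsOfEmpires in
/-- Let `τ` be a territory and `t` a transition enabled in `τ`. Then the
replaced territory `replace(t,τ)` is a territory, and `τ ▷t replace(t,τ)` holds. -/
theorem statement9 {Place Trans Stmt State : Type*}
    [Fintype Place] [Fintype Trans] [Fintype Stmt]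
    (N : PetriNet Place Trans Stmt State)
    (τ : Set (Set Place)) (hτ : N.IsTerritory τ) (t : Trans)
    (ht : N.terrEnabled t τ) :
    N.IsTerritory (N.replaceT t τ) ∧ N.terrFires τ t (N.replaceT t τ) := by
  classical
  obtain ⟨hreg, hdisj, hreach⟩ := hτ
  obtain ⟨f, hf, hfne⟩ := ht
  have hfinj : ∀ p1 ∈ N.pre t, ∀ p2 ∈ N.pre t, f p1 = f p2 → p1 = p2 := by
    intro p1 h1 p2 h2 he
    by_contra hne
    exact hfne p1 h1 p2 h2 hne he
  -- every region of τ is either the region of a pre-place or a bystander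
  have classify : ∀ r ∈ τ, (∃ p, p ∈ N.pre t ∧ r = f p) ∨ r ∈ N.bystanders t τ := by
    intro r hr
    by_cases hc : r ∩ N.pre t = ∅
    · exact Or.inr ⟨hr, hc⟩
    · obtain ⟨p, hpr, hppre⟩ := Set.nonempty_iff_ne_empty.mpr hc
      refine Or.inl ⟨p, hppre, ?_⟩
      by_contra hne
      have hd := hdisj r hr (f p) (hf p hppre).1 hne
      have : p ∈ r ∩ f p := ⟨hpr, (hf p hppre).2⟩
      rw [hd] at this
      exact this
  -- key: for any choice of representatives of the bystanders, the marking consisting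
  -- of those representatives together with post t is reachable
  have key : ∀ h : Set Place → Place, (∀ r ∈ N.bystanders t τ, h r ∈ r) →
      N.Reachable ({x | ∃ r ∈ N.bystanders t τ, x = h r} ∪ N.post t) := by
    intro h hh
    set g : Set Place → Place := fun r =>
      if hc : ∃ p, p ∈ N.pre t ∧ r = f p then hc.choose else h r with hg
    have hgpre : ∀ p ∈ N.pre t, g (f p) = p := by
      intro p hp
      have hc : ∃ p', p' ∈ N.pre t ∧ f p = f p' := ⟨p, hp, rfl⟩
      simp only [hg, dif_pos hc]
      exact hfinj _ hc.choose_spec.1 _ hp hc.choose_spec.2.symm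
    have hgby : ∀ r ∈ N.bystanders t τ, g r = h r := by
      intro r hr
      have hc : ¬ ∃ p', p' ∈ N.pre t ∧ r = f p' := by
        rintro ⟨p, hp, rfl⟩
        have : p ∈ f p ∩ N.pre t := ⟨(hf p hp).2, hp⟩
        rw [hr.2] at this
        exact this
      simp only [hg, dif_neg hc]
    set m : Set Place := {x | ∃ r ∈ τ, x = g r} with hm
    have hmreach : N.Reachable m := by
      apply hreach
      refine ⟨g, ?_, rfl⟩
      intro r hr
      by_cases hc : ∃ p', p' ∈ N.pre t ∧ r = f p'
      · obtain ⟨p, hp, hrfp⟩ := hc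
        subst hrfp
        rw [hgpre p hp]
        exact (hf p hp).2
      · rcases classify r hr with hcl | hby
        · exact absurd hcl hc
        · rw [hgby r hby]
          exact hh r hby
    have hpre : N.pre t ⊆ m := by
      intro p hp
      exact ⟨f p, (hf p hp).1, (hgpre p hp).symm⟩
    have hset : {x | ∃ r ∈ N.bystanders t τ, x = h r} ∪ N.post t
        = (m \ N.pre t) ∪ N.post t := by
      congr 1
      ext x
      constructor
      · rintro ⟨r, hr, rfl⟩
        refine ⟨⟨r, hr.1, (hgby r hr).symm⟩, ?_⟩
        intro hx
        have : h r ∈ r ∩ N.pre t := ⟨hh r hr, hx⟩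
        rw [hr.2] at this
        exact this
      · rintro ⟨⟨r, hr, rfl⟩, hx⟩
        rcases classify r hr with ⟨p, hp, rfl⟩ | hby
        · rw [hgpre p hp] at hx
          exact absurd hp hx
        · exact ⟨r, hby, hgby r hby⟩
    rw [hset]
    exact hmreach.step ⟨hpre, rfl⟩
  -- a bystander containing a post-place must be a singleton
  have hfree : ∀ r ∈ N.bystanders t τ, ∀ p' ∈ N.post t, p' ∈ r → r = {p'} := by
    intro r hr p' hp' hpr
    by_contra hne
    have hq : ∃ q ∈ r, q ≠ p' := by
      by_contra hq
      push_neg at hq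
      apply hne
      ext x
      constructor
      · intro hx; exact hq x hx
      · intro hx; rw [Set.mem_singleton_iff] at hx; rw [hx]; exact hpr
    obtain ⟨q, hqr, hqne⟩ := hq
    set h : Set Place → Place := fun r' =>
      if r' = r then q else if hr' : r'.Nonempty then hr'.choose else q with hhdef
    have hh : ∀ r' ∈ N.bystanders t τ, h r' ∈ r' := by
      intro r' hr'
      by_cases he : r' = r
      · subst he; simp only [hhdef, if_pos rfl]; exact hqr
      · have hne' : r'.Nonempty := (hreg r' hr'.1).1
        simp only [hhdef, if_neg he, dif_pos hne']
        exact hne'.choose_spec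
    have hM := key h hh
    have hqM : q ∈ {x | ∃ r' ∈ N.bystanders t τ, x = h r'} ∪ N.post t :=
      Or.inl ⟨r, hr, by simp [hhdef]⟩
    have hpM : p' ∈ {x | ∃ r' ∈ N.bystanders t τ, x = h r'} ∪ N.post t := Or.inr hp'
    exact (hreg r hr.1).2 q hqr p' hpr ⟨hqne, _, hM, hqM, hpM⟩
  -- bystanders = τ \ pre-regions
  have hbyeq : N.bystanders t τ = τ \ {r | ∃ p ∈ N.pre t, r = f p} := by
    ext r
    constructor
    · intro hr
      refine ⟨hr.1, ?_⟩
      rintro ⟨p, hp, rfl⟩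
      have : p ∈ f p ∩ N.pre t := ⟨(hf p hp).2, hp⟩
      rw [hr.2] at this
      exact this
    · rintro ⟨hr, hnf⟩
      rcases classify r hr with ⟨p, hp, rfl⟩ | hby
      · exact absurd ⟨p, hp, rfl⟩ hnf
      · exact hby
  constructor
  · refine ⟨?_, ?_, ?_⟩
    · -- all elements are regions
      rintro r (hby | ⟨p, _, rfl⟩)
      · exact hreg r hby.1
      · exact PetriNet.singleton_isRegion p
    · -- pairwise disjoint
      rintro r1 hr1 r2 hr2 hne
      rw [Set.eq_empty_iff_forall_notMem]
      rintro x ⟨hx1, hx2⟩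
      rcases hr1 with hby1 | ⟨p1, hp1, rfl⟩
      · rcases hr2 with hby2 | ⟨p2, hp2, rfl⟩
        · have := hdisj r1 hby1.1 r2 hby2.1 hne
          rw [Set.eq_empty_iff_forall_notMem] at this
          exact this x ⟨hx1, hx2⟩
        · rw [Set.mem_singleton_iff] at hx2
          subst hx2
          exact hne (hfree r1 hby1 x hp2 hx1)
      · rcases hr2 with hby2 | ⟨p2, hp2, rfl⟩
        · rw [Set.mem_singleton_iff] at hx1
          subst hx1
          exact hne (hfree r2 hby2 x hp1 hx2).symm
        · rw [Set.mem_singleton_iff] at hx1 hx2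
          subst hx1
          exact hne (hx2 ▸ rfl)
    · -- treaty members are reachable
      rintro m' ⟨h, hh, rfl⟩
      have hh' : ∀ r ∈ N.bystanders t τ, h r ∈ r := fun r hr => hh r (Or.inl hr)
      have heq : {p | ∃ r ∈ N.replaceT t τ, p = h r}
          = {x | ∃ r ∈ N.bystanders t τ, x = h r} ∪ N.post t := by
        ext x
        constructor
        · rintro ⟨r, hr | ⟨p, hp, rfl⟩, rfl⟩
          · exact Or.inl ⟨r, hr, rfl⟩
          · have := hh {p} (Or.inr ⟨p, hp, rfl⟩)
            rw [Set.mem_singleton_iff] at this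
            rw [this]
            exact Or.inr hp
        · rintro (⟨r, hr, rfl⟩ | hx)
          · exact ⟨r, Or.inl hr, rfl⟩
          · have := hh {x} (Or.inr ⟨x, hx, rfl⟩)
            rw [Set.mem_singleton_iff] at this
            exact ⟨{x}, Or.inr ⟨x, hx, rfl⟩, this.symm⟩
      rw [heq]
      exact key h hh'
  · refine ⟨f, fun p => {p}, hf, hfne, ?_, ?_, ?_⟩
    · intro p _
      exact ⟨PetriNet.singleton_isRegion p, rfl⟩
    · intro p1 _ p2 _ hne he
      exact hne (Set.singleton_eq_singleton_iff.mp he)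
    · rw [PetriNet.replaceT, hbyeq]
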